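/- Let (R, m) be a commutative Noetherian local ring and let M be a separated R-module. Then Ass(M̂) ⊆ Koatt(M) holds if and only if Koatt(M̂) = Koatt(M). -/

import Mathlib

open IsLocalRing TensorProduct

universe u v w x

/-- `Koatt M`: the set of prime ideals that are annihilators of submodules of `M`. -/
def Koatt (R : Type u) [CommRing R] (M : Type v) [AddCommGroup M] [Module R M] :
    Set (Ideal R) :=
  {p | p.IsPrime ∧ ∃ U : Submodule R M, U.annihilator = p}

/-! Since `M ↪ M̂`, and `Ass ⊆ Koatt` for any module, only `Koatt(M̂) ⊆ Koatt(M)` needs work.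
A prime that is an intersection of members of `Koatt(M)` lies in `Koatt(M)` (the annihilator of a
sum is the intersection of the annihilators), so it suffices that in the complete module `M̂` every
`p ∈ Koatt(M̂)` is the intersection of the associated primes containing it. If `a ∉ p` lay in all of
them, the closed submodule `(0 :_{M̂} p)` would be `a`-power torsion, and a diagonal argument in
`M̂` makes a single power `a ^ n` kill `m ^ k (0 :_{M̂} p)`; then `m ^ k ⊆ p`, so `p = m`, which is
itself associated. -/

section Koatt

variable {R : Type*} [CommRing R] {M M' : Type*} [AddCommGroup M] [Module R M]
  [AddCommGroup M'] [Module R M']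

theorem associatedPrimes_subset_koatt [IsNoetherianRing R] : associatedPrimes R M ⊆ Koatt R M := by
  intro p hp
  obtain ⟨hprime, x, rfl⟩ := isAssociatedPrime_iff.mp hp
  exact ⟨hprime, R ∙ x, Submodule.bot_colon'.symm⟩

theorem koatt_subset_of_injective (f : M →ₗ[R] M') (hf : Function.Injective f) :
    Koatt R M ⊆ Koatt R M' := fun _ ⟨hp, U, hU⟩ =>
  ⟨hp, U.map f, (LinearEquiv.annihilator_eq (U.equivMapOfInjective f hf)).symm.trans hU⟩

theorem mem_koatt_of_eq_sInf {S : Set (Ideal R)} (hS : S ⊆ Koatt R M) {p : Ideal R}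
    (hp : p.IsPrime) (h : p = sInf S) : p ∈ Koatt R M := by
  choose U hU using fun q : S => (hS q.2).2
  refine ⟨hp, ⨆ q, U q, ?_⟩
  rw [Submodule.annihilator_iSup, h, sInf_eq_iInf']
  exact iInf_congr hU

theorem Ideal.IsMaximal.mem_associatedPrimes_of_mem_koatt {m : Ideal R} (hm : m.IsMaximal)
    (h : m ∈ Koatt R M) : m ∈ associatedPrimes R M := by
  obtain ⟨-, U, hU⟩ := h
  obtain ⟨x, hxU, hx⟩ := (Submodule.ne_bot_iff U).mp fun hU0 =>
    hm.ne_top (by rw [← hU, hU0, Submodule.annihilator_bot])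
  have hmx : m = (R ∙ x).annihilator :=
    hm.eq_of_le (fun h => hx (Submodule.span_singleton_eq_bot.mp
        (Submodule.annihilator_eq_top_iff.mp h)))
      (hU ▸ Submodule.annihilator_mono ((Submodule.span_singleton_le_iff_mem x U).mpr hxU))
  refine ⟨hm.isPrime, x, ?_⟩
  rw [Submodule.bot_colon', ← hmx, hm.isPrime.radical]

end Koatt

section Noetherian

variable {R : Type*} [CommRing R] [IsNoetherianRing R] {M : Type*} [AddCommGroup M] [Module R M]

theorem exists_isSMulRegular_span_pow_smul (a : R) (x : M) :
    ∃ n : ℕ, IsSMulRegular (R ∙ (a ^ n • x)) a := by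
  have hmono : Monotone fun n : ℕ => (R ∙ (a ^ n • x)).annihilator := by
    refine monotone_nat_of_le_succ fun n r hr => ?_
    rw [Submodule.mem_annihilator_span_singleton] at hr ⊢
    rw [pow_succ', mul_smul, smul_comm, hr, smul_zero]
  obtain ⟨n, hn⟩ : ∃ n, ∀ m, n ≤ m →
      (R ∙ (a ^ n • x)).annihilator = (R ∙ (a ^ m • x)).annihilator :=
    monotone_stabilizes_iff_noetherian.mpr inferInstance ⟨_, hmono⟩
  refine ⟨n, IsSMulRegular.of_right_eq_zero_of_smul fun z hz => ?_⟩
  obtain ⟨r, hr⟩ := Submodule.mem_span_singleton.mp z.2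
  have hr' : r ∈ (R ∙ (a ^ (n + 1) • x)).annihilator := by
    rw [Submodule.mem_annihilator_span_singleton, pow_succ', mul_smul, smul_comm, hr]
    exact congrArg Subtype.val hz
  rw [← hn (n + 1) n.le_succ, Submodule.mem_annihilator_span_singleton, hr] at hr'
  exact Subtype.ext hr'

theorem exists_mem_associatedPrimes_annihilator_le_of_forall_pow_smul_ne_zero {a : R} {x : M}
    (hx : ∀ n : ℕ, a ^ n • x ≠ 0) :
    ∃ q ∈ associatedPrimes R M, (R ∙ x).annihilator ≤ q ∧ a ∉ q := by
  obtain ⟨n, hreg⟩ := exists_isSMulRegular_span_pow_smul a x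
  set K := R ∙ (a ^ n • x)
  have : Nontrivial K := Submodule.nontrivial_iff_ne_bot.mpr (by simpa [K] using hx n)
  obtain ⟨q, hq⟩ := associatedPrimes.nonempty R K
  refine ⟨q, associatedPrimes.subset_of_injective K.injective_subtype hq, ?_, fun ha => ?_⟩
  · have hKx : K ≤ R ∙ x :=
      (Submodule.span_singleton_le_iff_mem _ _).mpr
        (Submodule.smul_mem _ _ (Submodule.mem_span_singleton_self x))
    calc (R ∙ x).annihilator ≤ K.annihilator := Submodule.annihilator_mono hKx
      _ = (⊤ : Submodule R K).annihilator := LinearEquiv.annihilator_eq Submodule.topEquiv.symm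
      _ ≤ q := hq.annihilator_le
  · obtain ⟨z, hz, haz⟩ := (biUnion_associatedPrimes_eq_zero_divisors R K).subset
      (Set.mem_biUnion hq ha)
    exact hz (hreg.right_eq_zero_of_smul haz)

end Noetherian

/-- Closedness of `N` in the `I`-adic topology of `L`. -/
def Submodule.IsAdicClosed {R L : Type*} [CommRing R] [AddCommGroup L] [Module R L]
    (N : Submodule R L) (I : Ideal R) : Prop :=
  ∀ y : L, (∀ k : ℕ, ∃ z ∈ N, y ≡ z [SMOD (I ^ k • ⊤ : Submodule R L)]) → y ∈ N

section Adic

variable {R : Type*} [CommRing R] (I : Ideal R) {L : Type*} [AddCommGroup L] [Module R L]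

theorem Submodule.torsionBySet_isAdicClosed [IsHausdorff I L] (s : Set R) :
    (Submodule.torsionBySet R L s).IsAdicClosed I := by
  intro y hy
  refine (Submodule.mem_torsionBySet_iff _ _).mpr fun g => IsHausdorff.haus ‹_› _ fun k => ?_
  obtain ⟨z, hz, hyz⟩ := hy k
  simpa [(Submodule.mem_torsionBySet_iff _ _).mp hz g] using hyz.smul (g : R)

theorem IsHausdorff.exists_gt_notMem_pow_smul_top [IsHausdorff I L] {x : L} (hx : x ≠ 0)
    (B : ℕ) : ∃ B' > B, x ∉ (I ^ B' • ⊤ : Submodule R L) := by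
  by_contra! h
  refine hx (IsHausdorff.haus ‹_› x fun n => SModEq.zero.mpr ?_)
  exact Submodule.pow_smul_top_le I L (le_max_left n (B + 1)) (h _ (by omega))

theorem IsPrecomplete.exists_smodEq_of_smodEq_succ [IsPrecomplete I L] {s : ℕ → L}
    {B : ℕ → ℕ} (hB : StrictMono B)
    (hs : ∀ j, s j ≡ s (j + 1) [SMOD (I ^ B j • ⊤ : Submodule R L)]) :
    ∃ y : L, ∀ j, s j ≡ y [SMOD (I ^ B j • ⊤ : Submodule R L)] := by
  have hmono : ∀ {i j}, i ≤ j → s i ≡ s j [SMOD (I ^ B i • ⊤ : Submodule R L)] := by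
    intro i j hij
    induction j, hij using Nat.le_induction with
    | base => exact SModEq.refl _
    | succ j hij ih =>
      exact ih.trans ((hs j).mono (Submodule.pow_smul_top_le I L (hB.monotone hij)))
  obtain ⟨y, hy⟩ := IsPrecomplete.prec ‹_› fun hij =>
    (hmono hij).mono (Submodule.pow_smul_top_le I L (hB.id_le _))
  exact ⟨y, fun j => (hmono (hB.id_le j)).trans (hy (B j))⟩

theorem IsAdicComplete.exists_pow_smul_pow_smul_eq_zero [IsAdicComplete I L]
    {N : Submodule R L} (hN : N.IsAdicClosed I) {a : R}
    (htor : ∀ x ∈ N, ∃ n : ℕ, a ^ n • x = 0) :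
    ∃ n k : ℕ, ∀ x ∈ I ^ k • N, a ^ n • x = 0 := by
  by_contra! H
  have step : ∀ (n B : ℕ) (s : N), ∃ (s' : N) (B' : ℕ), B < B' ∧
      (s : L) ≡ s' [SMOD (I ^ B • ⊤ : Submodule R L)] ∧
      a ^ n • (s' : L) ∉ (I ^ B' • ⊤ : Submodule R L) := by
    intro n B s
    obtain ⟨s', hss', hs'⟩ : ∃ s' : N, (s : L) ≡ s' [SMOD (I ^ B • ⊤ : Submodule R L)] ∧
        a ^ n • (s' : L) ≠ 0 := by
      by_cases hs : a ^ n • (s : L) = 0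
      · obtain ⟨x, hxN, hx⟩ := H n B
        refine ⟨s + ⟨x, Submodule.smul_le_right hxN⟩, ?_, by simpa [hs] using hx⟩
        simpa [SModEq.sub_mem] using (smul_mono_right _ le_top : I ^ B • N ≤ I ^ B • ⊤) hxN
      · exact ⟨s, SModEq.refl _, hs⟩
    obtain ⟨B', hBB', hB'⟩ := IsHausdorff.exists_gt_notMem_pow_smul_top I hs' B
    exact ⟨s', B', hBB', hss', hB'⟩
  choose f g hg hf hfg using step
  -- `a ^ j • s (j + 1)` is nonzero modulo `I ^ B (j + 1)`, and all later terms agree with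
  -- `s (j + 1)` modulo that power, so no power of `a` kills the limit.
  let seq : ℕ → N × ℕ := fun j =>
    Nat.rec (motive := fun _ => N × ℕ) (0, 0) (fun j p => (f j p.2 p.1, g j p.2 p.1)) j
  let s : ℕ → N := fun j => (seq j).1
  let B : ℕ → ℕ := fun j => (seq j).2
  have hB : StrictMono B := strictMono_nat_of_lt_succ fun j => hg j (B j) (s j)
  obtain ⟨y, hy⟩ := IsPrecomplete.exists_smodEq_of_smodEq_succ I (s := fun j => (s j : L)) hB
    fun j => hf j (B j) (s j)
  have hyN : y ∈ N := hN y fun k =>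
    ⟨s k, (s k).2, ((hy k).mono (Submodule.pow_smul_top_le I L (hB.id_le k))).symm⟩
  obtain ⟨n, hn⟩ := htor y hyN
  refine hfg n (B n) (s n) (SModEq.zero.mp ?_)
  simpa [hn] using (hy (n + 1)).smul (a ^ n)

end Adic

section Complete

variable {R : Type*} [CommRing R] [IsNoetherianRing R] {L : Type*} [AddCommGroup L] [Module R L]

/-- Put `N = (0 :_L p)`. If every associated prime above `p` contained `a`, then `N` would be
`a`-power torsion; being closed, some `a ^ n` kills `I ^ k • N`, forcing `I ^ k ≤ p`. -/
theorem exists_mem_associatedPrimes_of_mem_koatt (I : Ideal R) [IsAdicComplete I L]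
    {p : Ideal R} (hp : p ∈ Koatt R L) (hIp : ¬I ≤ p) {a : R} (ha : a ∉ p) :
    ∃ q ∈ associatedPrimes R L, p ≤ q ∧ a ∉ q := by
  by_contra! hall
  obtain ⟨hprime, U, hU⟩ := hp
  set N := Submodule.torsionBySet R L p
  have hNp : N.annihilator ≤ p := hU ▸ Submodule.annihilator_mono fun x hx =>
    (Submodule.mem_torsionBySet_iff _ _).mpr fun g => Submodule.mem_annihilator.mp (hU ▸ g.2) x hx
  have htor : ∀ x ∈ N, ∃ n : ℕ, a ^ n • x = 0 := by
    intro x hx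
    by_contra! hx'
    obtain ⟨q, hq, hxq, haq⟩ :=
      exists_mem_associatedPrimes_annihilator_le_of_forall_pow_smul_ne_zero hx'
    refine haq (hall q hq (le_trans (fun g hg => ?_) hxq))
    exact (Submodule.mem_annihilator_span_singleton _ _).mpr
      ((Submodule.mem_torsionBySet_iff _ _).mp hx ⟨g, hg⟩)
  obtain ⟨n, k, hnk⟩ := IsAdicComplete.exists_pow_smul_pow_smul_eq_zero I
    (Submodule.torsionBySet_isAdicClosed I _) htor
  refine hIp (Ideal.IsPrime.le_of_pow_le (n := k) fun g hg => ?_)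
  have hag : a ^ n * g ∈ p := hNp (Submodule.mem_annihilator.mpr fun x hx => by
    rw [mul_smul]
    exact hnk _ (Submodule.smul_mem_smul hg hx))
  exact (hprime.mem_or_mem hag).resolve_left fun h => ha (hprime.mem_of_pow_mem n h)

theorem IsLocalRing.eq_sInf_associatedPrimes_of_mem_koatt [IsLocalRing R]
    [IsAdicComplete (maximalIdeal R) L] {p : Ideal R} (hp : p ∈ Koatt R L) :
    p = sInf {q | q ∈ associatedPrimes R L ∧ p ≤ q} := by
  refine le_antisymm (le_sInf fun q hq => hq.2) fun a ha => ?_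
  by_contra hap
  obtain ⟨q, hq, hpq, haq⟩ : ∃ q ∈ associatedPrimes R L, p ≤ q ∧ a ∉ q := by
    by_cases hmp : maximalIdeal R ≤ p
    · obtain rfl : p = maximalIdeal R := le_antisymm (le_maximalIdeal hp.1.ne_top) hmp
      exact ⟨_, (maximalIdeal.isMaximal R).mem_associatedPrimes_of_mem_koatt hp, le_rfl, hap⟩
    · exact exists_mem_associatedPrimes_of_mem_koatt _ hp hmp hap
  exact haq (Ideal.mem_sInf.mp ha ⟨hq, hpq⟩)

end Complete

theorem ass_completion_subset_koatt_iff_koatt_completion_eq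
    (R : Type u) [CommRing R] [IsNoetherianRing R] [IsLocalRing R]
    (M : Type v) [AddCommGroup M] [Module R M]
    [IsHausdorff (maximalIdeal R) M] :
    associatedPrimes R (AdicCompletion (maximalIdeal R) M) ⊆ Koatt R M ↔
      Koatt R (AdicCompletion (maximalIdeal R) M) = Koatt R M := by
  have : IsAdicComplete (maximalIdeal R) (AdicCompletion (maximalIdeal R) M) :=
    AdicCompletion.isAdicComplete (IsNoetherian.noetherian _)
  refine ⟨fun hA => ?_, fun h => h ▸ associatedPrimes_subset_koatt⟩
  refine (Set.Subset.antisymm (fun p hp => ?_)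
    (koatt_subset_of_injective _ (AdicCompletion.of_injective _ M)))
  exact mem_koatt_of_eq_sInf (fun q hq => hA hq.1) hp.1
    (eq_sInf_associatedPrimes_of_mem_koatt hp)
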